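/- Let n ≥ 2. The map (ℝ_{>0})^{n-1} → (ℝ_{>0})^{n-1} sending u = (u_1,...,u_{n-1}) to (φ_1(u),...,φ_{n-1}(u)), where φ_i(u) := u_{i-1}^{-1} u_i^2 u_{i+1}^{-1} with the convention u_0 = u_n = 1, is a bijection. -/

import Mathlib

/-!
Taking logarithms coordinatewise turns the map into the linear map of the Cartan matrix of type
`A_{n-1}`, `x ↦ (-x_{i-1} + 2 x_i - x_{i+1})_i` with `x_0 = x_n = 0`. Its kernel is trivial: a
vector in the kernel is an arithmetic progression `x_c = c x_1` vanishing at `c = n`, so `x_1 = 0`.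
Hence the linear map is bijective, and so is its conjugate by the coordinatewise `exp`/`log`
bijection between `ℝ^{n-1}` and `(ℝ_{>0})^{n-1}`.
-/

noncomputable section

namespace PetersonPaper

/-- `u_c` for `c ∈ {0,1,…,n}` (1-based), with the convention `u_0 = u_n = 1`:
for `1 ≤ c ≤ n-1` it is the `c`-th coordinate of `u ∈ ℝ^{n-1}`, and `1`
otherwise. -/
def uext (n : ℕ) (u : Fin (n-1) → ℝ) (c : ℕ) : ℝ :=
  if h : 1 ≤ c ∧ c ≤ n - 1 then u ⟨c - 1, by omega⟩ else 1

open Function Real Set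

section ExpLog

variable {ι : Type*}

lemma invOn_exp_comp_log_comp :
    InvOn (fun x : ι → ℝ => exp ∘ x) (fun u => log ∘ u) {u | ∀ i, 0 < u i} univ :=
  ⟨fun _ hu => funext fun i => exp_log (hu i), fun x _ => funext fun i => log_exp (x i)⟩

lemma bijOn_log_comp : BijOn (fun u : ι → ℝ => log ∘ u) {u | ∀ i, 0 < u i} univ :=
  invOn_exp_comp_log_comp.bijOn (mapsTo_univ _ _) fun x _ i => exp_pos (x i)

lemma bijOn_exp_comp : BijOn (fun x : ι → ℝ => exp ∘ x) univ {u | ∀ i, 0 < u i} :=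
  bijOn_log_comp.symm invOn_exp_comp_log_comp.symm

end ExpLog

section Cartan

variable (m : ℕ)

def zeroExt (x : Fin m → ℝ) (c : ℕ) : ℝ :=
  if h : 1 ≤ c ∧ c ≤ m then x ⟨c - 1, by omega⟩ else 0

@[simp]
lemma zeroExt_add (x y : Fin m → ℝ) (c : ℕ) :
    zeroExt m (x + y) c = zeroExt m x c + zeroExt m y c := by
  unfold zeroExt; split_ifs <;> simp

@[simp]
lemma zeroExt_smul (r : ℝ) (x : Fin m → ℝ) (c : ℕ) :
    zeroExt m (r • x) c = r * zeroExt m x c := by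
  unfold zeroExt; split_ifs <;> simp

@[simp]
lemma zeroExt_zero (x : Fin m → ℝ) : zeroExt m x 0 = 0 := by
  simp [zeroExt]

lemma zeroExt_succ (x : Fin m → ℝ) (i : Fin m) : zeroExt m x (i + 1) = x i := by
  simp [zeroExt]

lemma zeroExt_of_lt {x : Fin m → ℝ} {c : ℕ} (hc : m < c) : zeroExt m x c = 0 := by
  unfold zeroExt; rw [dif_neg (by omega)]

def cartanMap : (Fin m → ℝ) →ₗ[ℝ] (Fin m → ℝ) where
  toFun x i := -zeroExt m x i + 2 * zeroExt m x (i + 1) - zeroExt m x (i + 2)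
  map_add' x y := by funext i; simp only [zeroExt_add, Pi.add_apply]; ring
  map_smul' r x := by funext i; simp only [zeroExt_smul, Pi.smul_apply, smul_eq_mul,
    RingHom.id_apply]; ring

lemma cartanMap_apply (x : Fin m → ℝ) (i : Fin m) :
    cartanMap m x i = -zeroExt m x i + 2 * zeroExt m x (i + 1) - zeroExt m x (i + 2) :=
  rfl

variable {m}

lemma zeroExt_eq_mul_of_cartanMap_eq_zero {x : Fin m → ℝ} (hx : cartanMap m x = 0) {c : ℕ}
    (hc : c ≤ m) :
    zeroExt m x c = c * zeroExt m x 1 ∧ zeroExt m x (c + 1) = (c + 1) * zeroExt m x 1 := by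
  induction c with
  | zero => simp
  | succ k ih =>
    obtain ⟨hk, hk1⟩ := ih (by omega)
    have hharm := congrFun hx ⟨k, by omega⟩
    rw [cartanMap_apply, Pi.zero_apply] at hharm
    push_cast
    exact ⟨hk1, by linarith⟩

variable (m)

lemma cartanMap_injective : Injective (cartanMap m) := by
  refine (injective_iff_map_eq_zero _).2 fun x hx => funext fun i => ?_
  have hend := (zeroExt_eq_mul_of_cartanMap_eq_zero hx le_rfl).2
  rw [zeroExt_of_lt m (Nat.lt_succ_self m)] at hend
  have hx1 : zeroExt m x 1 = 0 := (mul_eq_zero.1 hend.symm).resolve_left (by positivity)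
  rw [← zeroExt_succ m x i, (zeroExt_eq_mul_of_cartanMap_eq_zero hx (by omega)).2, hx1, mul_zero,
    Pi.zero_apply]

lemma cartanMap_bijective : Bijective (cartanMap m) :=
  ⟨cartanMap_injective m, LinearMap.injective_iff_surjective.1 (cartanMap_injective m)⟩

end Cartan

lemma uext_exp_comp (n : ℕ) (x : Fin (n - 1) → ℝ) (c : ℕ) :
    uext n (exp ∘ x) c = exp (zeroExt (n - 1) x c) := by
  unfold uext zeroExt
  split_ifs <;> simp

lemma phi_exp_comp_eq_exp_cartanMap (n : ℕ) (x : Fin (n - 1) → ℝ) (i : Fin (n - 1)) :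
    (uext n (exp ∘ x) i)⁻¹ * uext n (exp ∘ x) (i + 1) ^ 2 * (uext n (exp ∘ x) (i + 2))⁻¹ =
      exp (cartanMap (n - 1) x i) := by
  simp only [uext_exp_comp, cartanMap_apply, ← exp_neg, ← exp_nat_mul, sub_eq_add_neg, exp_add]
  push_cast
  ring

theorem cartan_map_bijective_on_pos (n : ℕ) :
    Set.BijOn
      (fun (u : Fin (n-1) → ℝ) (i : Fin (n-1)) =>
        (uext n u i.1)⁻¹ * (uext n u (i.1 + 1)) ^ 2 * (uext n u (i.1 + 2))⁻¹)
      { u : Fin (n-1) → ℝ | ∀ i, 0 < u i }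
      { u : Fin (n-1) → ℝ | ∀ i, 0 < u i } := by
  refine (bijOn_exp_comp.comp ((cartanMap_bijective _).bijOn_univ.comp bijOn_log_comp)).congr
    fun u hu => funext fun i => ?_
  have hu_exp : u = exp ∘ log ∘ u := (invOn_exp_comp_log_comp.1 hu).symm
  show exp (cartanMap (n - 1) (log ∘ u) i) = _
  rw [← phi_exp_comp_eq_exp_cartanMap, ← hu_exp]

end PetersonPaper
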